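/- Hadamard expansion, norm bound, and cluster counting: Let H = Σ_{a=1}^m H_a be an n-qubit Hamiltonian with ‖H_a‖_op ≤ 1 and degree d ≥ 2. For every matrix X and every α ∈ ℂ, e^{αH} X e^{−αH} = Σ_{k≥0} Σ_{a_1,…,a_k ∈ [m]} (α^k/k!)·[H_{a_k},[…[H_{a_2},[H_{a_1}, X]]…]]. Moreover: (i) ‖[H_{a_k},[…[H_{a_1}, X]…]]‖_op ≤ 2^k·‖X‖_op; (ii) this nested commutator is zero unless (a_1,…,a_k) is a cluster from supp(X), i.e. for each ℓ ∈ [k] the support of H_{a_ℓ} intersects supp(X) ∪ supp(H_{a_1}) ∪ … ∪ supp(H_{a_{ℓ−1}}); (iii) if supp(X) ⊆ supp(H_b) for some b ∈ [m], then the number of clusters of length k from supp(X) is at most k!·(d+1)^k. -/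

import Mathlib

open scoped BigOperators
open Classical
open scoped ComplexOrder

noncomputable section

/-- Index type for the standard basis of the `n`-qubit Hilbert space `(ℂ²)^{⊗n}`. -/
abbrev QIdx (n : ℕ) := Fin n → Fin 2

/-- Operators (matrices) on the `n`-qubit Hilbert space `(ℂ²)^{⊗n}`. -/
abbrev QMat (n : ℕ) := Matrix (QIdx n) (QIdx n) ℂ

/-- The trace norm (Schatten 1-norm) of a matrix: `‖A‖₁ = tr √(AᴴA)`. -/
noncomputable def traceNorm {I : Type} [Fintype I] [DecidableEq I] (A : Matrix I I ℂ) : ℝ :=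
  (((Matrix.posSemidef_conjTranspose_mul_self A).1.eigenvectorUnitary : Matrix I I ℂ) *
    Matrix.diagonal (fun i => ((Real.sqrt ((Matrix.posSemidef_conjTranspose_mul_self A).1.eigenvalues i) : ℝ) : ℂ)) *
    (star ((Matrix.posSemidef_conjTranspose_mul_self A).1.eigenvectorUnitary : Matrix I I ℂ))).trace.re

/-- The operator norm (spectral norm) of a complex matrix. -/
noncomputable def opNorm {I : Type} [Fintype I] [DecidableEq I] (A : Matrix I I ℂ) : ℝ :=
  ‖Matrix.toEuclideanCLM (𝕜 := ℂ) A‖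

/-- The partial trace of an `n`-qubit operator over the qubit at site `i`, as an operator
on the remaining qubits. -/
noncomputable def ptraceSite {n : ℕ} (i : Fin n) (X : QMat n) :
    Matrix ({j : Fin n // j ≠ i} → Fin 2) ({j : Fin n // j ≠ i} → Fin 2) ℂ :=
  fun a b => ∑ s : Fin 2,
    X (fun j => if h : j = i then s else a ⟨j, h⟩) (fun j => if h : j = i then s else b ⟨j, h⟩)

/-- A transport plan for a (traceless Hermitian) operator `X`: a decomposition
`X = Σ_i X_i` into Hermitian matrices with `tr_i(X_i) = 0`. -/
structure IsTransportPlan {n : ℕ} (X : QMat n) (Xs : Fin n → QMat n) : Prop where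
  herm : ∀ i, (Xs i).IsHermitian
  traceless : ∀ i, (Xs i).trace = 0
  sum_eq : ∑ i, Xs i = X
  ptrace_eq : ∀ i, ptraceSite i (Xs i) = 0

/-- The quantum Wasserstein norm of order 1 of De Palma–Marvian–Trevisan–Lloyd. -/
noncomputable def wnorm {n : ℕ} (X : QMat n) : ℝ :=
  sInf {c : ℝ | ∃ Xs : Fin n → QMat n, IsTransportPlan X Xs ∧ c = ∑ i, traceNorm (Xs i) / 2}

/-- A density matrix: positive semidefinite with unit trace. -/
def IsDensity {n : ℕ} (ρ : QMat n) : Prop := ρ.PosSemidef ∧ ρ.trace = 1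

/-- The Dobrushin influence matrix of a map `Φ = Φ₁ + ⋯ + Φ_n`:
`D_{ij} = max { ‖Φ_i(ρ − ϱ)‖_{W1} : ρ, ϱ density matrices with tr_j(ρ − ϱ) = 0 }`. -/
noncomputable def dobrushin {n : ℕ} (Φs : Fin n → (QMat n → QMat n)) :
    Matrix (Fin n) (Fin n) ℝ :=
  fun i j => sSup {w : ℝ | ∃ ρ ϱ : QMat n, IsDensity ρ ∧ IsDensity ϱ ∧
    ptraceSite j (ρ - ϱ) = 0 ∧ w = wnorm (Φs i (ρ - ϱ))}

/-- The `1 → 1` norm of a real matrix: the maximum column `ℓ₁`-norm. -/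
noncomputable def norm11 {n : ℕ} (D : Matrix (Fin n) (Fin n) ℝ) : ℝ :=
  ⨆ j, ∑ i, |D i j|

/-- `Q` is an update matrix for `Φ` if `Φ` maps any transport plan with cost vector `x`
to a transport plan with cost vector entrywise at most `Q x`. -/
def IsUpdateMatrix {n : ℕ} (Q : Matrix (Fin n) (Fin n) ℝ) (Φ : QMat n → QMat n) : Prop :=
  ∀ (X : QMat n) (Xs : Fin n → QMat n), IsTransportPlan X Xs →
    ∃ Ys : Fin n → QMat n, IsTransportPlan (Φ X) Ys ∧
      ∀ j, traceNorm (Ys j) / 2 ≤ Q.mulVec (fun i => traceNorm (Xs i) / 2) j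

/-! ### Hamiltonian combinatorics -/

/-- `M` is supported on the set of qubits `S` (i.e. `M = M_S ⊗ Id`). -/
def SupportedOn {n : ℕ} (S : Finset (Fin n)) (M : QMat n) : Prop :=
  (∀ a b : QIdx n, (∃ j, j ∉ S ∧ a j ≠ b j) → M a b = 0) ∧
  (∀ a b a' b' : QIdx n, (∀ j ∈ S, a j = a' j) → (∀ j ∈ S, b j = b' j) →
     (∀ j ∉ S, a j = b j) → (∀ j ∉ S, a' j = b' j) → M a b = M a' b')

/-- The support of an operator: the minimal set of qubits on which it acts nontrivially. -/
noncomputable def supp {n : ℕ} (M : QMat n) : Finset (Fin n) :=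
  (Finset.univ.filter fun S : Finset (Fin n) => SupportedOn S M).inf id

/-- The interaction graph of a local Hamiltonian: two distinct sites are adjacent iff
some term's support contains both. -/
def interGraph {n m : ℕ} (Hterm : Fin m → QMat n) : SimpleGraph (Fin n) where
  Adj i j := i ≠ j ∧ ∃ a, i ∈ supp (Hterm a) ∧ j ∈ supp (Hterm a)
  symm := by
    refine ⟨?_⟩
    rintro i j ⟨hij, a, hi, hj⟩
    exact ⟨hij.symm, a, hj, hi⟩
  loopless := by
    refine ⟨?_⟩
    rintro i ⟨hii, -⟩
    exact hii rfl

/-- The graph distance on sites induced by the interaction hypergraph. -/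
noncomputable def hamDist {n m : ℕ} (Hterm : Fin m → QMat n) (i j : Fin n) : ℕ :=
  (interGraph Hterm).dist i j

/-- The ball of radius `r` around site `i` in the interaction graph distance. -/
noncomputable def ballH {n m : ℕ} (Hterm : Fin m → QMat n) (i : Fin n) (r : ℕ) :
    Finset (Fin n) :=
  Finset.univ.filter fun j => hamDist Hterm i j ≤ r

/-- Distance from a site to a set of sites. -/
noncomputable def distToSet {n m : ℕ} (Hterm : Fin m → QMat n) (j : Fin n)
    (S : Finset (Fin n)) : ℕ :=
  sInf {r : ℕ | ∃ i ∈ S, hamDist Hterm j i = r}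

/-- Distance between two sets of sites. -/
noncomputable def setDist {n m : ℕ} (Hterm : Fin m → QMat n) (S T : Finset (Fin n)) : ℕ :=
  sInf {r : ℕ | ∃ i ∈ S, ∃ j ∈ T, hamDist Hterm i j = r}

/-- For `S ⊆ [n]`, the real matrix `E_S` with `(E_S)_{uv} = 1` iff `u, v ∈ S`. -/
def ESet {n : ℕ} (S : Finset (Fin n)) : Matrix (Fin n) (Fin n) ℝ :=
  fun u v => if u ∈ S ∧ v ∈ S then 1 else 0

/-- `S_a`: the union of the supports of the terms appearing in the sequence `a`. -/
noncomputable def SOf {n m : ℕ} (Hterm : Fin m → QMat n) {s : ℕ} (a : Fin s → Fin m) :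
    Finset (Fin n) :=
  Finset.univ.biUnion fun ℓ => supp (Hterm (a ℓ))

/-- `a` is a cluster from the set `S₀`: each term's support intersects `S₀` together with
the supports of the previous terms. -/
def IsClusterFrom {n m : ℕ} (Hterm : Fin m → QMat n) (S0 : Finset (Fin n)) {s : ℕ}
    (a : Fin s → Fin m) : Prop :=
  ∀ ℓ : Fin s, ∃ j ∈ supp (Hterm (a ℓ)),
    j ∈ S0 ∨ ∃ p : Fin s, p < ℓ ∧ j ∈ supp (Hterm (a p))

/-- The ball of radius `r` around a set of sites. -/
noncomputable def ballOfSet {n m : ℕ} (Hterm : Fin m → QMat n) (S : Finset (Fin n)) (r : ℕ) :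
    Finset (Fin n) :=
  Finset.univ.filter fun j => distToSet Hterm j S ≤ r

/-! ### Matrix exponentials, Gibbs states, and the balanced Lindbladian -/

/-- The matrix exponential, via its power series. -/
noncomputable def mexp {I : Type} [Fintype I] [DecidableEq I] (A : Matrix I I ℂ) :
    Matrix I I ℂ :=
  ∑' k : ℕ, ((k.factorial : ℂ)⁻¹ • A ^ k)

/-- The Gibbs state `σ = e^{−βH} / tr(e^{−βH})` at inverse temperature `β`. -/
noncomputable def gibbs {I : Type} [Fintype I] [DecidableEq I] (β : ℝ) (H : Matrix I I ℂ) :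
    Matrix I I ℂ :=
  (mexp ((-β : ℂ) • H)).trace⁻¹ • mexp ((-β : ℂ) • H)

/-- The real power `A^r` of a Hermitian matrix, via its spectral decomposition. -/
noncomputable def hermPow {I : Type} [Fintype I] [DecidableEq I] (A : Matrix I I ℂ) (r : ℝ) :
    Matrix I I ℂ :=
  if h : A.IsHermitian then
    (h.eigenvectorUnitary : Matrix I I ℂ) *
      Matrix.diagonal (fun i => ((h.eigenvalues i ^ r : ℝ) : ℂ)) *
      star (h.eigenvectorUnitary : Matrix I I ℂ)
  else 0

/-- The coherent term `G^P` of the balanced Lindbladian, defined in the eigenbasis of `σ`. -/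
noncomputable def coherentG {I : Type} [Fintype I] [DecidableEq I] (σ P : Matrix I I ℂ) :
    Matrix I I ℂ :=
  if h : σ.IsHermitian then
    let U : Matrix I I ℂ := h.eigenvectorUnitary
    let lam : I → ℝ := h.eigenvalues
    let P' : Matrix I I ℂ := star U * P * U
    let w : I → I → ℝ := fun i j =>
      (lam i ^ ((1:ℝ)/2) - lam j ^ ((1:ℝ)/2)) /
        (2 * lam i ^ ((1:ℝ)/4) * lam j ^ ((1:ℝ)/4) *
          (lam i ^ ((1:ℝ)/2) + lam j ^ ((1:ℝ)/2)))
    let G' : Matrix I I ℂ := Matrix.of (fun i j =>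
      (-Complex.I) * ((w i j : ℝ) : ℂ) *
        (∑ t, ((lam t ^ ((1:ℝ)/2) : ℝ) : ℂ) * P' i t * P' t j))
    U * G' * star U
  else 0

/-- The jump operator `A^P = σ^{1/4} P σ^{−1/4}`. -/
noncomputable def jumpA {I : Type} [Fintype I] [DecidableEq I] (σ P : Matrix I I ℂ) :
    Matrix I I ℂ :=
  hermPow σ ((1:ℝ)/4) * P * hermPow σ (-((1:ℝ)/4))

/-- The Lindblad generator `ρ ↦ −i[G,ρ] + AρA† − ½{A†A, ρ}` as a linear endomorphism. -/
noncomputable def lindbladOp {I : Type} [Fintype I] [DecidableEq I] (G A : Matrix I I ℂ) :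
    Module.End ℂ (Matrix I I ℂ) :=
  (-Complex.I) • (LinearMap.mulLeft ℂ G - LinearMap.mulRight ℂ G)
    + (LinearMap.mulRight ℂ (star A)) ∘ₗ (LinearMap.mulLeft ℂ A)
    - ((1:ℂ)/2) • (LinearMap.mulLeft ℂ (star A * A) + LinearMap.mulRight ℂ (star A * A))

/-- The balanced Lindbladian `L^P` for jump `P` with invariant state `σ`. -/
noncomputable def LP {I : Type} [Fintype I] [DecidableEq I] (σ P : Matrix I I ℂ) :
    Module.End ℂ (Matrix I I ℂ) :=
  lindbladOp (coherentG σ P) (jumpA σ P)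

/-- The three nonidentity single-qubit Pauli matrices. -/
noncomputable def pauli1 : Fin 3 → Matrix (Fin 2) (Fin 2) ℂ :=
  ![!![0, 1; 1, 0], !![0, -Complex.I; Complex.I, 0], !![1, 0; 0, -1]]

/-- The Pauli matrix `σ_p` acting at site `j` of an `n`-qubit system. -/
noncomputable def pauliAt {n : ℕ} (j : Fin n) (p : Fin 3) : QMat n :=
  fun a b => (if ∀ l, l ≠ j → a l = b l then 1 else 0) * pauli1 p (a j) (b j)

/-- The site-`j` balanced Lindbladian `L_j* = Σ_{P ∈ P_j} L^P`. -/
noncomputable def siteL {n : ℕ} (σ : QMat n) (j : Fin n) : Module.End ℂ (QMat n) :=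
  ∑ p : Fin 3, LP σ (pauliAt j p)

/-- The balanced Lindbladian `L* = Σ_j L_j*`. -/
noncomputable def fullL {n : ℕ} (σ : QMat n) : Module.End ℂ (QMat n) :=
  ∑ j, siteL σ j

/-- The quantum dynamical semigroup `e^{L}` generated by a Lindbladian, applied to a state. -/
noncomputable def superExp {n : ℕ} (L : Module.End ℂ (QMat n)) (ρ : QMat n) : QMat n :=
  ∑' k : ℕ, ((k.factorial : ℂ)⁻¹ • (L ^ k) ρ)

/-! ### Entropic quantities -/

/-- The von Neumann entropy `S(ρ) = −tr(ρ log ρ)` of a (Hermitian) matrix. -/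
noncomputable def vnEntropy {I : Type} [Fintype I] [DecidableEq I] (ρ : Matrix I I ℂ) : ℝ :=
  if h : ρ.IsHermitian then -∑ i, h.eigenvalues i * Real.log (h.eigenvalues i) else 0

/-- The reduced operator on the subsystem `S`: the partial trace over the complement of `S`. -/
noncomputable def reduceTo {n : ℕ} (S : Finset (Fin n)) (X : QMat n) :
    Matrix ({j : Fin n // j ∈ S} → Fin 2) ({j : Fin n // j ∈ S} → Fin 2) ℂ :=
  fun a b => ∑ c : {j : Fin n // j ∉ S} → Fin 2,
    X (fun j => if h : j ∈ S then a ⟨j, h⟩ else c ⟨j, h⟩)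
      (fun j => if h : j ∈ S then b ⟨j, h⟩ else c ⟨j, h⟩)

/-- The nested commutator `[H_{a_s}, [⋯, [H_{a_1}, X]⋯]]`. -/
noncomputable def nestedComm {n m : ℕ} (Hterm : Fin m → QMat n) {s : ℕ}
    (a : Fin s → Fin m) (X : QMat n) : QMat n :=
  (List.ofFn a).foldl (fun M t => Hterm t * M - M * Hterm t) X

/-!
Conjugation by `e^{αH}` is the exponential of the derivation `α·ad_H`, and `(ad_H)^k` expands
multinomially into the nested commutators; each commutator at most doubles the operator norm.
A commutator `[H_a, Y]` vanishes when `supp H_a` misses `supp Y` and is otherwise supported on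
the union, so a nonzero nested commutator grows its support along a cluster. In a cluster, the
`ℓ`-th term either meets `supp X ⊆ supp H_b`, hence is one of the `≤ d` neighbours of `H_b`, or is
one of the `≤ d` neighbours of one of the `ℓ - 1` earlier terms: at most `ℓ·d` choices, so at most
`k!·d^k` clusters of length `k`.
-/

open NormedSpace LieAlgebra

attribute [local instance] LieRing.ofAssociativeRing

section BanachAlgebra

variable {𝕂 : Type*} [RCLike 𝕂]

theorem ContinuousLinearMap.exp_apply {E : Type*} [NormedAddCommGroup E] [NormedSpace 𝕂 E]
    [CompleteSpace E] (T : E →L[𝕂] E) (z : E) :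
    exp T z = ∑' s : ℕ, (s.factorial⁻¹ : 𝕂) • (T ^ s) z := by
  rw [exp_eq_tsum 𝕂]
  simpa using (ContinuousLinearMap.apply 𝕂 E z).map_tsum (expSeries_summable' (𝕂 := 𝕂) T)

variable {A : Type*} [NormedRing A] [NormedAlgebra 𝕂 A] [CompleteSpace A]

theorem exp_mul_left_apply (x z : A) :
    exp (ContinuousLinearMap.mul 𝕂 A x) z = exp x * z := by
  have hpow (s : ℕ) : (ContinuousLinearMap.mul 𝕂 A x ^ s) z = x ^ s * z := by
    rw [← ContinuousLinearMap.coe_coe, ContinuousLinearMap.toLinearMap_pow]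
    exact congr($(LinearMap.pow_mulLeft 𝕂 A x s) z)
  simp_rw [ContinuousLinearMap.exp_apply, hpow, ← smul_mul_assoc, exp_eq_tsum 𝕂]
  exact (expSeries_summable' x).tsum_mul_right z

theorem exp_mul_right_apply (x z : A) :
    exp ((ContinuousLinearMap.mul 𝕂 A).flip x) z = z * exp x := by
  have hpow (s : ℕ) : ((ContinuousLinearMap.mul 𝕂 A).flip x ^ s) z = z * x ^ s := by
    rw [← ContinuousLinearMap.coe_coe, ContinuousLinearMap.toLinearMap_pow]
    exact congr($(LinearMap.pow_mulRight 𝕂 A x s) z)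
  simp_rw [ContinuousLinearMap.exp_apply, hpow, ← mul_smul_comm, exp_eq_tsum 𝕂]
  exact (expSeries_summable' x).tsum_mul_left z

theorem exp_mul_mul_exp_neg (x y : A) :
    exp x * y * exp (-x) = ∑' s : ℕ, (s.factorial⁻¹ : 𝕂) • (ad 𝕂 A x ^ s) y := by
  -- `exp_add_of_commute` asks for a normed `ℚ`-algebra, which is not found by instance search
  let +nondep : NormedAlgebra ℚ (A →L[𝕂] A) := .restrictScalars ℚ 𝕂 (A →L[𝕂] A)
  set L := ContinuousLinearMap.mul 𝕂 A x
  set R := (ContinuousLinearMap.mul 𝕂 A).flip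
  have hLR : Commute L (R (-x)) := by
    ext z
    simp [L, R, mul_assoc]
  have had : ((L + R (-x) : A →L[𝕂] A) : A →ₗ[𝕂] A) = ad 𝕂 A x := by
    ext z
    simp [L, R, Ring.lie_def, sub_eq_add_neg]
  calc exp x * y * exp (-x) = exp L (exp (R (-x)) y) := by
        rw [exp_mul_right_apply, exp_mul_left_apply, mul_assoc]
    _ = exp (L + R (-x)) y := by rw [exp_add_of_commute hLR]; rfl
    _ = _ := by
      refine (ContinuousLinearMap.exp_apply _ y).trans (tsum_congr fun s => ?_)
      rw [← had, ← ContinuousLinearMap.toLinearMap_pow, ContinuousLinearMap.coe_coe]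

end BanachAlgebra

theorem norm_lie_le {A : Type*} [NormedRing A] (x y : A) : ‖⁅x, y⁆‖ ≤ 2 * ‖x‖ * ‖y‖ := by
  rw [Ring.lie_def]
  calc ‖x * y - y * x‖ ≤ ‖x‖ * ‖y‖ + ‖y‖ * ‖x‖ :=
        (norm_sub_le _ _).trans (add_le_add (norm_mul_le x y) (norm_mul_le y x))
    _ = 2 * ‖x‖ * ‖y‖ := by ring

section NestedCommutator

variable {n m : ℕ} (Hterm : Fin m → QMat n)

theorem nestedComm_fin_zero (a : Fin 0 → Fin m) (X : QMat n) : nestedComm Hterm a X = X := rfl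

theorem nestedComm_succ {s : ℕ} (a : Fin (s + 1) → Fin m) (X : QMat n) :
    nestedComm Hterm a X = nestedComm Hterm (Fin.tail a) ⁅Hterm (a 0), X⁆ := by
  rw [nestedComm, List.ofFn_succ]
  rfl

theorem nestedComm_sum {ι : Type*} (t : Finset ι) {s : ℕ} (a : Fin s → Fin m)
    (Y : ι → QMat n) :
    nestedComm Hterm a (∑ i ∈ t, Y i) = ∑ i ∈ t, nestedComm Hterm a (Y i) := by
  induction s generalizing Y with
  | zero => rfl
  | succ s ih => simp only [nestedComm_succ Hterm a, lie_sum, ih]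

theorem nestedComm_zero {s : ℕ} (a : Fin s → Fin m) : nestedComm Hterm a (0 : QMat n) = 0 := by
  simpa using nestedComm_sum Hterm ∅ a (fun _ : Unit => 0)

theorem pow_ad_sum_apply (s : ℕ) (X : QMat n) :
    (ad ℂ (QMat n) (∑ t, Hterm t) ^ s) X = ∑ a : Fin s → Fin m, nestedComm Hterm a X := by
  induction s generalizing X with
  | zero => simp [nestedComm_fin_zero]
  | succ s ih =>
    rw [pow_succ, Module.End.mul_apply, ad_apply, sum_lie, ih,
      ← (Fin.consEquiv fun _ => Fin m).sum_comp, Fintype.sum_prod_type, Finset.sum_comm]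
    refine Fintype.sum_congr _ _ fun a => ?_
    rw [nestedComm_sum]
    exact Fintype.sum_congr _ _ fun t => (nestedComm_succ Hterm (Fin.cons t a) X).symm

end NestedCommutator

theorem mexp_eq_exp {I : Type} [Fintype I] [DecidableEq I] (B : Matrix I I ℂ) :
    mexp B = exp B := by
  rw [exp_eq_tsum ℂ]
  rfl

open scoped Matrix.Norms.L2Operator

theorem mexp_conj_eq_tsum_nestedComm {n m : ℕ} (Hterm : Fin m → QMat n) (α : ℂ) (X : QMat n) :
    mexp (α • ∑ a, Hterm a) * X * mexp ((-α) • ∑ a, Hterm a)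
      = ∑' s : ℕ, ∑ a : Fin s → Fin m, (α ^ s / (s.factorial : ℂ)) • nestedComm Hterm a X := by
  rw [mexp_eq_exp, mexp_eq_exp, neg_smul, exp_mul_mul_exp_neg (𝕂 := ℂ)]
  refine tsum_congr fun s => ?_
  rw [map_smul, smul_pow, LinearMap.smul_apply, pow_ad_sum_apply, smul_smul, Finset.smul_sum,
    div_eq_inv_mul]

theorem opNorm_eq_norm {I : Type} [Fintype I] [DecidableEq I] (A : Matrix I I ℂ) :
    opNorm A = ‖A‖ := rfl

theorem opNorm_nestedComm_le {n m : ℕ} {Hterm : Fin m → QMat n}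
    (hH : ∀ t, opNorm (Hterm t) ≤ 1) {s : ℕ} (a : Fin s → Fin m) (X : QMat n) :
    opNorm (nestedComm Hterm a X) ≤ 2 ^ s * opNorm X := by
  simp only [opNorm_eq_norm] at hH ⊢
  induction s generalizing X with
  | zero => simp [nestedComm_fin_zero]
  | succ s ih =>
    have hstep : ‖⁅Hterm (a 0), X⁆‖ ≤ 2 * ‖X‖ := by
      nlinarith [norm_lie_le (Hterm (a 0)) X, hH (a 0), norm_nonneg X]
    calc ‖nestedComm Hterm a X‖ ≤ 2 ^ s * ‖⁅Hterm (a 0), X⁆‖ := by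
          rw [nestedComm_succ]; exact ih _ _
      _ ≤ 2 ^ s * (2 * ‖X‖) := by gcongr
      _ = 2 ^ (s + 1) * ‖X‖ := by ring

/- Basis indices form the group `(Fin 2)^n`; acting trivially off `S` amounts to invariance of the
entries under simultaneous translation of both indices by vectors vanishing on `S`. -/
namespace SupportedOn

variable {n : ℕ} {S T : Finset (Fin n)} {M A B : QMat n}

theorem apply_add_add (hM : SupportedOn S M) {δ : QIdx n} (hδ : ∀ j ∈ S, δ j = 0)
    (a b : QIdx n) : M (a + δ) (b + δ) = M a b := by
  by_cases hab : ∃ j ∉ S, a j ≠ b j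
  · obtain ⟨j, hj, hne⟩ := hab
    rw [hM.1 a b ⟨j, hj, hne⟩, hM.1 _ _ ⟨j, hj, by simpa using hne⟩]
  · push Not at hab
    exact hM.2 _ _ _ _ (fun j hj => by simp [hδ j hj]) (fun j hj => by simp [hδ j hj])
      (fun j hj => by simp [hab j hj]) hab

theorem of_apply_add_add (hzero : ∀ a b : QIdx n, (∃ j, j ∉ S ∧ a j ≠ b j) → M a b = 0)
    (hadd : ∀ δ : QIdx n, (∀ j ∈ S, δ j = 0) → ∀ a b, M (a + δ) (b + δ) = M a b) :
    SupportedOn S M := by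
  refine ⟨hzero, fun a b a' b' ha hb hab ha'b' => ?_⟩
  have hb' : b' = b + (a' - a) := by
    funext j
    by_cases hj : j ∈ S
    · simp [hb j hj, ha j hj]
    · simp [hab j hj, ha'b' j hj]
  rw [hb', ← hadd (a' - a) (fun j hj => by simp [ha j hj]) a b, add_sub_cancel]

theorem _root_.supportedOn_univ (M : QMat n) : SupportedOn Finset.univ M :=
  of_apply_add_add (by simp) fun δ hδ a b => by
    rw [show δ = 0 from funext fun j => hδ j (Finset.mem_univ j), add_zero, add_zero]

theorem mono (hM : SupportedOn S M) (h : S ⊆ T) : SupportedOn T M :=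
  of_apply_add_add (fun a b ⟨j, hj, hne⟩ => hM.1 a b ⟨j, fun hjS => hj (h hjS), hne⟩)
    fun _ hδ => hM.apply_add_add fun j hj => hδ j (h hj)

theorem inter (hS : SupportedOn S M) (hT : SupportedOn T M) : SupportedOn (S ∩ T) M := by
  refine of_apply_add_add (fun a b ⟨j, hj, hne⟩ => ?_) fun δ hδ a b => ?_
  · by_cases hjS : j ∈ S
    · exact hT.1 a b ⟨j, fun hjT => hj (Finset.mem_inter.2 ⟨hjS, hjT⟩), hne⟩
    · exact hS.1 a b ⟨j, hjS, hne⟩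
  · -- split `δ` into a part vanishing on `S` and a part vanishing on `T`
    set δS : QIdx n := fun j => if j ∈ S then 0 else δ j
    have hδT : ∀ j ∈ T, (δ - δS) j = 0 := fun j hj => by
      by_cases hjS : j ∈ S
      · simp [δS, hjS, hδ j (Finset.mem_inter.2 ⟨hjS, hj⟩)]
      · simp [δS, hjS]
    rw [← sub_add_cancel δ δS, ← add_assoc, ← add_assoc,
      hS.apply_add_add (fun j hj => by simp [δS, hj]), hT.apply_add_add hδT]

theorem sub (hA : SupportedOn S A) (hB : SupportedOn S B) : SupportedOn S (A - B) :=
  of_apply_add_add (fun a b h => by simp [hA.1 a b h, hB.1 a b h])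
    fun _ hδ a b => by simp [hA.apply_add_add hδ, hB.apply_add_add hδ]

theorem mul (hA : SupportedOn S A) (hB : SupportedOn T B) : SupportedOn (S ∪ T) (A * B) := by
  refine of_apply_add_add (fun a b ⟨j, hj, hne⟩ => ?_) fun δ hδ a b => ?_
  · rw [Finset.mem_union, not_or] at hj
    rw [Matrix.mul_apply]
    refine Finset.sum_eq_zero fun c _ => ?_
    by_cases hc : a j = c j
    · rw [hB.1 c b ⟨j, hj.2, hc ▸ hne⟩, mul_zero]
    · rw [hA.1 a c ⟨j, hj.1, hc⟩, zero_mul]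
  · simp only [Matrix.mul_apply]
    refine (Fintype.sum_equiv (Equiv.addRight δ) _ _ fun c => ?_).symm
    rw [Equiv.coe_addRight, hA.apply_add_add (fun j hj => hδ j (Finset.mem_union_left _ hj)),
      hB.apply_add_add (fun j hj => hδ j (Finset.mem_union_right _ hj))]

theorem lie (hA : SupportedOn S A) (hB : SupportedOn T B) : SupportedOn (S ∪ T) ⁅A, B⁆ :=
  (hA.mul hB).sub ((hB.mul hA).mono (Finset.union_comm T S).le)

theorem commute (hA : SupportedOn S A) (hB : SupportedOn T B) (hST : Disjoint S T) :
    Commute A B := by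
  ext a b
  simp only [Matrix.mul_apply]
  -- `c ↦ a + b - c` matches the intermediate index of `A * B` with that of `B * A`
  refine Fintype.sum_equiv (Equiv.subLeft (a + b)) _ _ fun c => ?_
  rw [Equiv.subLeft_apply]
  by_cases hAc : ∃ j ∉ S, a j ≠ c j
  · obtain ⟨j, hj, hne⟩ := hAc
    rw [hA.1 a c ⟨j, hj, hne⟩, hA.1 (a + b - c) b ⟨j, hj, fun h => hne ?_⟩, zero_mul, mul_zero]
    simpa [add_sub_right_comm, sub_eq_zero] using h
  by_cases hBc : ∃ j ∉ T, c j ≠ b j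
  · obtain ⟨j, hj, hne⟩ := hBc
    rw [hB.1 c b ⟨j, hj, hne⟩, hB.1 a (a + b - c) ⟨j, hj, fun h => hne ?_⟩, mul_zero, zero_mul]
    simpa [add_sub_assoc, sub_eq_zero, eq_comm] using h
  push Not at hAc hBc
  have hA' := hA.apply_add_add (δ := b - c)
    (fun j hj => by simp [hBc j (Finset.disjoint_left.1 hST hj)]) a c
  have hB' := hB.apply_add_add (δ := a - c)
    (fun j hj => by simp [hAc j (Finset.disjoint_right.1 hST hj)]) c b
  rw [add_sub_cancel] at hA' hB'
  rw [← hA', ← hB', mul_comm]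
  congr 2 <;> abel

end SupportedOn

theorem supportedOn_supp {n : ℕ} (M : QMat n) : SupportedOn (supp M) M :=
  Finset.inf_induction (p := fun S => SupportedOn S M) (supportedOn_univ M)
    (fun _ h₁ _ h₂ => h₁.inter h₂) fun _ hS => (Finset.mem_filter.1 hS).2

section Clusters

variable {n m : ℕ} {Hterm : Fin m → QMat n}

theorem IsClusterFrom.of_tail {S : Finset (Fin n)} {s : ℕ} {a : Fin (s + 1) → Fin m}
    (h0 : (supp (Hterm (a 0)) ∩ S).Nonempty)
    (h : IsClusterFrom Hterm (S ∪ supp (Hterm (a 0))) (Fin.tail a)) : IsClusterFrom Hterm S a := by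
  intro ℓ
  cases ℓ using Fin.cases with
  | zero =>
    obtain ⟨j, hj⟩ := h0
    exact ⟨j, (Finset.mem_inter.1 hj).1, .inl (Finset.mem_inter.1 hj).2⟩
  | succ ℓ =>
    obtain ⟨j, hj, hS | ⟨p, hp, hjp⟩⟩ := h ℓ
    · rcases Finset.mem_union.1 hS with hS | hj0
      · exact ⟨j, hj, .inl hS⟩
      · exact ⟨j, hj, .inr ⟨0, Fin.succ_pos ℓ, hj0⟩⟩
    · exact ⟨j, hj, .inr ⟨p.succ, Fin.succ_lt_succ_iff.2 hp, hjp⟩⟩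

theorem nestedComm_eq_zero_of_not_isClusterFrom {S : Finset (Fin n)} {X : QMat n}
    (hX : SupportedOn S X) {s : ℕ} (a : Fin s → Fin m) (ha : ¬ IsClusterFrom Hterm S a) :
    nestedComm Hterm a X = 0 := by
  induction s generalizing S X with
  | zero => exact absurd finZeroElim ha
  | succ s ih =>
    rw [nestedComm_succ]
    by_cases h0 : (supp (Hterm (a 0)) ∩ S).Nonempty
    · exact ih (((supportedOn_supp _).lie hX).mono (Finset.union_comm _ _).le) _
        fun h => ha (.of_tail h0 h)
    · have hdisj : Disjoint (supp (Hterm (a 0))) S := by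
        rwa [Finset.disjoint_iff_inter_eq_empty, ← Finset.not_nonempty_iff_eq_empty]
      rw [commute_iff_lie_eq.1 ((supportedOn_supp _).commute hX hdisj), nestedComm_zero]

end Clusters

section GrowingSequences

open Finset

variable {α : Type*}

def IsGrownFrom (R : Finset α) (N : α → Finset α) {s : ℕ} (a : Fin s → α) : Prop :=
  ∀ ℓ, a ℓ ∈ R ∨ ∃ p < ℓ, a ℓ ∈ N (a p)

theorem IsGrownFrom.init_and_last_mem {R : Finset α} {N : α → Finset α} {s : ℕ}
    {a : Fin (s + 1) → α} (ha : IsGrownFrom R N a) :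
    IsGrownFrom R N (Fin.init a) ∧
      a (Fin.last s) ∈ R ∪ univ.biUnion fun p => N (Fin.init a p) := by
  refine ⟨fun ℓ => ?_, ?_⟩
  · obtain h | ⟨p, hp, hN⟩ := ha ℓ.castSucc
    · exact .inl h
    · obtain ⟨p', rfl⟩ := Fin.exists_castSucc_eq.2 (Fin.ne_last_of_lt hp)
      exact .inr ⟨p', Fin.castSucc_lt_castSucc_iff.1 hp, hN⟩
  · obtain h | ⟨p, hp, hN⟩ := ha (Fin.last s)
    · exact mem_union_left _ h
    · obtain ⟨p', rfl⟩ := Fin.exists_castSucc_eq.2 hp.ne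
      exact mem_union_right _ (mem_biUnion.2 ⟨p', mem_univ _, hN⟩)

theorem card_filter_isGrownFrom_le [Fintype α] (R : Finset α) (N : α → Finset α) {d : ℕ}
    (hR : #R ≤ d) (hN : ∀ t, #(N t) ≤ d) (s : ℕ) :
    #{a : Fin s → α | IsGrownFrom R N a} ≤ s.factorial * d ^ s := by
  induction s with
  | zero => exact (card_filter_le _ _).trans (by simp)
  | succ s ih =>
    set G := ({a | IsGrownFrom R N a} : Finset (Fin s → α))
    set G' := ({a | IsGrownFrom R N a} : Finset (Fin (s + 1) → α))
    set candidates : (Fin s → α) → Finset α := fun a' => R ∪ univ.biUnion fun p => N (a' p)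
    have hcard (a' : Fin s → α) : #(candidates a') ≤ (s + 1) * d := by
      calc #(candidates a') ≤ d + s * d := (card_union_le _ _).trans (add_le_add hR
            (card_biUnion_le.trans ((sum_le_sum fun p _ => hN (a' p)).trans (by simp))))
        _ = (s + 1) * d := by ring
    have hsub : G' ⊆ G.biUnion fun a' =>
        (candidates a').image (Fin.snoc (α := fun _ => α) a') := by
      intro a ha
      obtain ⟨hinit, hlast⟩ := (mem_filter.1 ha).2.init_and_last_mem
      exact mem_biUnion.2 ⟨Fin.init a, mem_filter.2 ⟨mem_univ _, hinit⟩,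
        mem_image.2 ⟨a (Fin.last s), hlast, Fin.snoc_init_self a⟩⟩
    calc #G' ≤ ∑ a' ∈ G, #((candidates a').image (Fin.snoc (α := fun _ => α) a')) :=
          (card_le_card hsub).trans card_biUnion_le
      _ ≤ ∑ a' ∈ G, (s + 1) * d := sum_le_sum fun a' _ => card_image_le.trans (hcard a')
      _ ≤ s.factorial * d ^ s * ((s + 1) * d) := by
          rw [sum_const, smul_eq_mul]; exact Nat.mul_le_mul_right _ ih
      _ = (s + 1).factorial * d ^ (s + 1) := by rw [Nat.factorial_succ, pow_succ]; ring

end GrowingSequences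

def termNeighbors {n m : ℕ} (Hterm : Fin m → QMat n) (t : Fin m) : Finset (Fin m) :=
  Finset.univ.filter fun c => (supp (Hterm c) ∩ supp (Hterm t)).Nonempty

section ClusterCounting

variable {n m : ℕ} {Hterm : Fin m → QMat n}

theorem IsClusterFrom.isGrownFrom {S : Finset (Fin n)} {b : Fin m} (hS : S ⊆ supp (Hterm b))
    {s : ℕ} {a : Fin s → Fin m} (ha : IsClusterFrom Hterm S a) :
    IsGrownFrom (termNeighbors Hterm b) (termNeighbors Hterm) a := by
  intro ℓ
  obtain ⟨j, hj, hjS | ⟨p, hp, hjp⟩⟩ := ha ℓ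
  · exact .inl (Finset.mem_filter.2 ⟨Finset.mem_univ _, j, Finset.mem_inter.2 ⟨hj, hS hjS⟩⟩)
  · exact .inr ⟨p, hp, Finset.mem_filter.2 ⟨Finset.mem_univ _, j, Finset.mem_inter.2 ⟨hj, hjp⟩⟩⟩

theorem card_isClusterFrom_le {d : ℕ} (hdeg : ∀ t, (termNeighbors Hterm t).card ≤ d)
    {S : Finset (Fin n)} {b : Fin m} (hS : S ⊆ supp (Hterm b)) (s : ℕ) :
    Nat.card {a : Fin s → Fin m // IsClusterFrom Hterm S a} ≤ s.factorial * d ^ s := by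
  rw [Nat.card_eq_fintype_card, Fintype.card_subtype]
  refine (Finset.card_le_card fun a ha => ?_).trans
    (card_filter_isGrownFrom_le _ _ (hdeg b) hdeg s)
  exact Finset.mem_filter.2 ⟨Finset.mem_univ _, (Finset.mem_filter.1 ha).2.isGrownFrom hS⟩

end ClusterCounting

theorem hadamard_expansion_and_cluster_counting_general
    (n m : ℕ) (Hterm : Fin m → QMat n)
    (hopnorm : ∀ a, opNorm (Hterm a) ≤ 1)
    (d : ℕ)
    (hdeg : ∀ a, (Finset.univ.filter fun b =>
        (supp (Hterm b) ∩ supp (Hterm a)).Nonempty).card ≤ d) :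
    (∀ (α : ℂ) (X : QMat n),
        mexp (α • ∑ a, Hterm a) * X * mexp ((-α) • ∑ a, Hterm a)
          = ∑' s : ℕ, ∑ a : Fin s → Fin m,
              (α ^ s / (Nat.factorial s : ℂ)) • nestedComm Hterm a X) ∧
    (∀ (s : ℕ) (a : Fin s → Fin m) (X : QMat n),
        opNorm (nestedComm Hterm a X) ≤ 2 ^ s * opNorm X) ∧
    (∀ (s : ℕ) (a : Fin s → Fin m) (X : QMat n),
        ¬ IsClusterFrom Hterm (supp X) a → nestedComm Hterm a X = 0) ∧
    (∀ (b : Fin m) (X : QMat n), supp X ⊆ supp (Hterm b) → ∀ s : ℕ,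
        Nat.card {a : Fin s → Fin m // IsClusterFrom Hterm (supp X) a}
          ≤ Nat.factorial s * (d + 1) ^ s) :=
  ⟨mexp_conj_eq_tsum_nestedComm Hterm,
    fun _ => opNorm_nestedComm_le hopnorm,
    fun _ a _ => nestedComm_eq_zero_of_not_isClusterFrom (supportedOn_supp _) a,
    fun _ _ hX s => (card_isClusterFrom_le hdeg hX s).trans
      (Nat.mul_le_mul_left _ (Nat.pow_le_pow_left d.le_succ s))⟩

/-- **Hadamard expansion, norm bound, and cluster counting**:
`e^{αH} X e^{−αH} = Σ_k Σ_{a ∈ [m]^k} (α^k/k!) [H_{a_k},[…[H_{a_1},X]…]]`, with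
(i) `‖[H_{a_k},[…[H_{a_1},X]…]]‖_op ≤ 2^k ‖X‖_op`, (ii) the nested commutator vanishes
unless `a` is a cluster from `supp(X)`, and (iii) if `supp(X) ⊆ supp(H_b)` then the number of
length-`k` clusters from `supp(X)` is at most `k! (d+1)^k`. -/
theorem hadamard_expansion_and_cluster_counting
    (n m : ℕ) (Hterm : Fin m → QMat n)
    (hherm : ∀ a, (Hterm a).IsHermitian)
    (hopnorm : ∀ a, opNorm (Hterm a) ≤ 1)
    (d : ℕ) (hd2 : 2 ≤ d)
    (hdeg : ∀ a, (Finset.univ.filter fun b =>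
        (supp (Hterm b) ∩ supp (Hterm a)).Nonempty).card ≤ d) :
    (∀ (α : ℂ) (X : QMat n),
        mexp (α • ∑ a, Hterm a) * X * mexp ((-α) • ∑ a, Hterm a)
          = ∑' s : ℕ, ∑ a : Fin s → Fin m,
              (α ^ s / (Nat.factorial s : ℂ)) • nestedComm Hterm a X) ∧
    (∀ (s : ℕ) (a : Fin s → Fin m) (X : QMat n),
        opNorm (nestedComm Hterm a X) ≤ 2 ^ s * opNorm X) ∧
    (∀ (s : ℕ) (a : Fin s → Fin m) (X : QMat n),
        ¬ IsClusterFrom Hterm (supp X) a → nestedComm Hterm a X = 0) ∧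
    (∀ (b : Fin m) (X : QMat n), supp X ⊆ supp (Hterm b) → ∀ s : ℕ,
        Nat.card {a : Fin s → Fin m // IsClusterFrom Hterm (supp X) a}
          ≤ Nat.factorial s * (d + 1) ^ s) :=
  hadamard_expansion_and_cluster_counting_general n m Hterm hopnorm d hdeg
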